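/- Let f, g : ℝⁿ → ℝ be convex and differentiable with Lipschitz gradients of constants L(f), L(g), and 0 < μ ≤ min{1/L(f), 1/L(g)}. Consider the FALM iteration: z¹ = x⁰ = y⁰, t₁ = 1; for k ≥ 1, x^k = argmin_x Q_g(x, z^k), y^k = argmin_y Q_f(y, x^k), t_{k+1} = (1+√(1+4t_k²))/2, z^{k+1} = y^k + ((t_k−1)/t_{k+1})(y^k − y^{k−1}). Then F(y^k) − F(x*) ≤ ‖x⁰ − x*‖² / (μ(k+1)²) for all k ≥ 1, where x* minimizes F = f + g. -/

import Mathlib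

/-!
Each half-step of FALM minimizes a linearized model: `Q_g(·, z)` majorizes `F` by the descent
lemma and is `μ⁻¹`-strongly convex, so its minimizer `x` satisfies the three-point inequality
`F(x) + ‖w - x‖²/(2μ) ≤ F(w) + ‖w - z‖²/(2μ)` for every `w`; likewise for the `y`-step from `x`.
As also `F(y) ≤ Q_f(y, x) ≤ Q_f(x, x) = F(x)`, averaging the two inequalities gives the
proximal-gradient inequality with step `2μ`. From there the argument is that of FISTA: since
`t_{k+1}² - t_{k+1} = t_k²`, the potential
`t_k² (F(y_k) - F(x*)) + ‖t_k y_k - (t_k - 1) y_{k-1} - x*‖²/(4μ)` is nonincreasing,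
and `t_k ≥ (k + 1)/2`.
-/

open scoped RealInnerProductSpace
open Set Filter Topology

variable {E : Type*} [NormedAddCommGroup E] [InnerProductSpace ℝ E]

theorem norm_smul_add_smul_sq (α β : ℝ) (a b : E) :
    ‖α • a + β • b‖ ^ 2 = α * (α + β) * ‖a‖ ^ 2 + β * (α + β) * ‖b‖ ^ 2 - α * β * ‖a - b‖ ^ 2 := by
  simp only [norm_add_sq_real, norm_sub_sq_real, norm_smul, real_inner_smul_left,
    real_inner_smul_right, mul_pow, Real.norm_eq_abs, sq_abs]
  ring

theorem le_of_forall_one_sub_mul_le {B D : ℝ} (h : ∀ s ∈ Ioo (0 : ℝ) 1, (1 - s) * B ≤ D) :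
    B ≤ D := by
  have hlim : Tendsto (fun s : ℝ => (1 - s) * B) (𝓝[>] 0) (𝓝 B) :=
    tendsto_nhdsWithin_of_tendsto_nhds
      ((by fun_prop : Continuous fun s : ℝ => (1 - s) * B).tendsto' 0 B (by simp))
  refine le_of_tendsto hlim ?_
  filter_upwards [Ioo_mem_nhdsGT one_pos] with s hs using h s hs

theorem StrongConvexOn.add_half_mul_norm_sq_le_of_isMinOn {S : Set E} {m : ℝ} {ψ : E → ℝ}
    {X w : E} (hψ : StrongConvexOn S m ψ) (hX : IsMinOn ψ S X) (hXS : X ∈ S) (hw : w ∈ S) :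
    ψ X + m / 2 * ‖w - X‖ ^ 2 ≤ ψ w := by
  rw [← le_sub_iff_add_le']
  refine le_of_forall_one_sub_mul_le fun s ⟨hs0, hs1⟩ => ?_
  have hconv := hψ.2 hXS hw (sub_nonneg.mpr hs1.le) hs0.le (sub_add_cancel 1 s)
  have hmin : ψ X ≤ ψ ((1 - s) • X + s • w) :=
    hX (hψ.1 hXS hw (sub_nonneg.mpr hs1.le) hs0.le (sub_add_cancel 1 s))
  rw [norm_sub_rev] at hconv
  simp only [smul_eq_mul] at hconv
  have : s * ((1 - s) * (m / 2 * ‖w - X‖ ^ 2)) ≤ s * (ψ w - ψ X) := by linarith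
  exact le_of_mul_le_mul_left this hs0

section Gradient

variable [CompleteSpace E]

theorem HasGradientAt.hasDerivAt_comp_add_smul {h : E → ℝ} {h' v d : E} {s : ℝ}
    (hd : HasGradientAt h h' (v + s • d)) :
    HasDerivAt (fun r : ℝ => h (v + r • d)) ⟪h', d⟫ s := by
  have hline : HasDerivAt (fun r : ℝ => v + r • d) d s := by
    simpa using ((hasDerivAt_id s).smul_const d).const_add v
  simpa [InnerProductSpace.toDual_apply_apply, Function.comp_def] using
    hd.hasFDerivAt.comp_hasDerivAt s hline

theorem ConvexOn.add_inner_le_of_hasGradientAt {h : E → ℝ} {h' v : E}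
    (hc : ConvexOn ℝ univ h) (hd : HasGradientAt h h' v) (w : E) :
    h v + ⟪h', w - v⟫ ≤ h w := by
  have hline : ConvexOn ℝ univ (fun r : ℝ => h (v + r • (w - v))) := by
    simpa [Function.comp_def, AffineMap.lineMap_apply, add_comm] using
      hc.comp_affineMap (AffineMap.lineMap v w)
  have := hline.le_slope_of_hasDerivAt (mem_univ 0) (mem_univ 1) one_pos
    (HasGradientAt.hasDerivAt_comp_add_smul (d := w - v) (s := 0) (by simpa using hd))
  simp only [slope_def_field, one_smul, zero_smul, add_sub_cancel, add_zero, sub_zero, div_one]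
    at this
  linarith

theorem le_add_inner_add_of_lipschitz_gradient {h : E → ℝ} {h' : E → E} {L : ℝ}
    (hd : ∀ x, HasGradientAt h (h' x) x) (hlip : ∀ a b, ‖h' a - h' b‖ ≤ L * ‖a - b‖)
    (u v : E) : h u ≤ h v + ⟪h' v, u - v⟫ + L / 2 * ‖u - v‖ ^ 2 := by
  set d := u - v
  set ψ : ℝ → ℝ := fun s => h (v + s • d) - s * ⟪h' v, d⟫ - L / 2 * s ^ 2 * ‖d‖ ^ 2
  have hψ' : ∀ s : ℝ, HasDerivAt ψ (⟪h' (v + s • d) - h' v, d⟫ - L * s * ‖d‖ ^ 2) s := by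
    intro s
    have := (((hd (v + s • d)).hasDerivAt_comp_add_smul).sub
      ((hasDerivAt_id s).mul_const ⟪h' v, d⟫)).sub
        (((hasDerivAt_pow 2 s).const_mul (L / 2)).mul_const (‖d‖ ^ 2))
    refine this.congr_deriv ?_
    rw [inner_sub_left]
    ring
  have hanti : AntitoneOn ψ (Ici 0) := by
    refine antitoneOn_of_hasDerivWithinAt_nonpos (convex_Ici 0)
      (fun s _ => (hψ' s).continuousAt.continuousWithinAt) (fun s _ => (hψ' s).hasDerivWithinAt)
      fun s hs => ?_
    rw [interior_Ici, mem_Ioi] at hs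
    rw [sub_nonpos]
    have hgrad : ‖h' (v + s • d) - h' v‖ ≤ L * (s * ‖d‖) := by
      simpa [norm_smul, abs_of_pos hs] using hlip (v + s • d) v
    calc ⟪h' (v + s • d) - h' v, d⟫ ≤ ‖h' (v + s • d) - h' v‖ * ‖d‖ := real_inner_le_norm _ _
      _ ≤ L * (s * ‖d‖) * ‖d‖ := by gcongr
      _ = L * s * ‖d‖ ^ 2 := by ring
  have := hanti (mem_Ici.mpr le_rfl) (mem_Ici.mpr zero_le_one) zero_le_one
  simp only [ψ, d, one_smul, zero_smul, add_sub_cancel, add_zero] at this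
  linarith

end Gradient

noncomputable def linearizedModel (f g : E → ℝ) (g' : E → E) (μ : ℝ) (u v : E) : ℝ :=
  f u + g v + ⟪g' v, u - v⟫ + ‖u - v‖ ^ 2 / (2 * μ)

theorem strongConvexOn_linearizedModel {f g : E → ℝ} (g' : E → E) (μ : ℝ)
    (hf : ConvexOn ℝ univ f) (v : E) :
    StrongConvexOn univ μ⁻¹ (linearizedModel f g g' μ · v) := by
  rw [strongConvexOn_iff_convex]
  have haffine : ConvexOn ℝ univ
      fun u => ⟪g' v - μ⁻¹ • v, u⟫ + (g v - ⟪g' v, v⟫ + μ⁻¹ / 2 * ‖v‖ ^ 2) :=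
    ((innerₛₗ ℝ (g' v - μ⁻¹ • v)).convexOn convex_univ).add_const _
  refine (hf.add haffine).congr fun u _ => ?_
  simp only [linearizedModel, Pi.add_apply, norm_sub_sq_real, inner_sub_left, inner_sub_right,
    real_inner_smul_left, real_inner_comm u v]
  ring

theorem le_linearizedModel [CompleteSpace E] {f g : E → ℝ} {g' : E → E} {L μ : ℝ}
    (hg' : ∀ x, HasGradientAt g (g' x) x) (hlip : ∀ a b, ‖g' a - g' b‖ ≤ L * ‖a - b‖)
    (hLμ : L ≤ μ⁻¹) (u v : E) :
    f u + g u ≤ linearizedModel f g g' μ u v := by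
  have hquad : L / 2 * ‖u - v‖ ^ 2 ≤ ‖u - v‖ ^ 2 / (2 * μ) :=
    calc L / 2 * ‖u - v‖ ^ 2 ≤ μ⁻¹ / 2 * ‖u - v‖ ^ 2 := by gcongr
      _ = ‖u - v‖ ^ 2 / (2 * μ) := by ring
  have := le_add_inner_add_of_lipschitz_gradient hg' hlip u v
  unfold linearizedModel
  linarith

theorem linearizedModel_prox_ineq [CompleteSpace E] {f g : E → ℝ} {g' : E → E} {L μ : ℝ}
    (hf : ConvexOn ℝ univ f) (hg : ConvexOn ℝ univ g) (hg' : ∀ x, HasGradientAt g (g' x) x)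
    (hlip : ∀ a b, ‖g' a - g' b‖ ≤ L * ‖a - b‖) (hLμ : L ≤ μ⁻¹) {X Z : E}
    (hX : IsMinOn (linearizedModel f g g' μ · Z) univ X) (w : E) :
    f X + g X + ‖w - X‖ ^ 2 / (2 * μ) ≤ f w + g w + ‖w - Z‖ ^ 2 / (2 * μ) := by
  have hgrowth := (strongConvexOn_linearizedModel g' μ hf Z).add_half_mul_norm_sq_le_of_isMinOn
    hX (mem_univ X) (mem_univ w)
  have hmajor := le_linearizedModel (f := f) hg' hlip hLμ X Z
  have hsupport := hg.add_inner_le_of_hasGradientAt (hg' Z) w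
  rw [show μ⁻¹ / 2 * ‖w - X‖ ^ 2 = ‖w - X‖ ^ 2 / (2 * μ) by ring] at hgrowth
  unfold linearizedModel at hgrowth hmajor
  linarith

theorem nesterov_sq_sub_self (a : ℝ) :
    ((1 + √(1 + 4 * a ^ 2)) / 2) ^ 2 - (1 + √(1 + 4 * a ^ 2)) / 2 = a ^ 2 := by
  linear_combination Real.sq_sqrt (by positivity : (0 : ℝ) ≤ 1 + 4 * a ^ 2) / 4

theorem add_half_le_nesterov (a : ℝ) : a + 1 / 2 ≤ (1 + √(1 + 4 * a ^ 2)) / 2 := by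
  have : 2 * a ≤ √(1 + 4 * a ^ 2) :=
    Real.le_sqrt_of_sq_le (by nlinarith)
  linarith

theorem fista_potential_step {F : E → ℝ} {τ T : ℝ} (hT : 1 ≤ T)
    {xstar y y' z' : E}
    (hprox : ∀ w, F y' + ‖w - y'‖ ^ 2 / (2 * τ) ≤ F w + ‖w - z'‖ ^ 2 / (2 * τ)) :
    T ^ 2 * (F y' - F xstar) + ‖T • y' - (T - 1) • y - xstar‖ ^ 2 / (2 * τ) ≤
      (T ^ 2 - T) * (F y - F xstar) + ‖T • z' - (T - 1) • y - xstar‖ ^ 2 / (2 * τ) := by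
  have hsplit : ∀ p : E, ‖T • p - (T - 1) • y - xstar‖ ^ 2 =
      (T - 1) * T * ‖y - p‖ ^ 2 + T * ‖xstar - p‖ ^ 2 - (T - 1) * ‖y - xstar‖ ^ 2 := fun p => by
    have : T • p - (T - 1) • y - xstar = -((T - 1) • (y - p) + (1 : ℝ) • (xstar - p)) := by
      module
    rw [this, norm_neg, norm_smul_add_smul_sq, sub_sub_sub_cancel_right]
    ring
  have h1 := mul_le_mul_of_nonneg_left (hprox y) (by nlinarith : 0 ≤ T * (T - 1))
  have h2 := mul_le_mul_of_nonneg_left (hprox xstar) (by linarith : 0 ≤ T)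
  rw [hsplit, hsplit]
  linear_combination h1 + h2

theorem fista_rate {F : E → ℝ} {τ : ℝ} (hτ : 0 < τ) {y z : ℕ → E} {t : ℕ → ℝ} (ht1 : t 1 = 1)
    (ht : ∀ k, 1 ≤ k → t (k + 1) = (1 + √(1 + 4 * t k ^ 2)) / 2)
    (hz : ∀ k, 1 ≤ k → z (k + 1) = y k + ((t k - 1) / t (k + 1)) • (y k - y (k - 1)))
    (hprox : ∀ k, 1 ≤ k → ∀ w, F (y k) + ‖w - y k‖ ^ 2 / (2 * τ) ≤ F w + ‖w - z k‖ ^ 2 / (2 * τ))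
    (xstar : E) {k : ℕ} (hk : 1 ≤ k) :
    F (y k) - F xstar ≤ 2 * ‖z 1 - xstar‖ ^ 2 / (τ * (k + 1) ^ 2) := by
  have ht_ge : ∀ j : ℕ, 1 ≤ j → ((j : ℝ) + 1) / 2 ≤ t j := by
    intro j hj
    induction j, hj using Nat.le_induction with
    | base => norm_num [ht1]
    | succ j hj ih => rw [ht j hj]; push_cast; linarith [add_half_le_nesterov (t j)]
  have hpotential : ∀ j : ℕ, 1 ≤ j → t j ^ 2 * (F (y j) - F xstar) +
      ‖t j • y j - (t j - 1) • y (j - 1) - xstar‖ ^ 2 / (2 * τ) ≤ ‖z 1 - xstar‖ ^ 2 / (2 * τ) := by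
    intro j hj
    induction j, hj using Nat.le_induction with
    | base =>
      have := hprox 1 le_rfl xstar
      simp only [ht1, one_pow, one_mul, sub_self, one_smul, zero_smul, sub_zero]
      rw [norm_sub_rev xstar, norm_sub_rev xstar] at this
      linarith
    | succ k hk ih =>
      have hT : 1 ≤ t (k + 1) := by
        have := ht_ge (k + 1) (by omega)
        push_cast at this
        linarith [(by positivity : (0 : ℝ) ≤ k)]
      have hmom : t (k + 1) • z (k + 1) - (t (k + 1) - 1) • y k =
          t k • y k - (t k - 1) • y (k - 1) := by
        rw [hz k hk, smul_add, smul_smul, mul_div_cancel₀ _ (by positivity)]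
        module
      calc _ ≤ (t (k + 1) ^ 2 - t (k + 1)) * (F (y k) - F xstar) +
            ‖t (k + 1) • z (k + 1) - (t (k + 1) - 1) • y k - xstar‖ ^ 2 / (2 * τ) :=
            fista_potential_step hT (hprox (k + 1) (by omega))
        _ = t k ^ 2 * (F (y k) - F xstar) +
            ‖t k • y k - (t k - 1) • y (k - 1) - xstar‖ ^ 2 / (2 * τ) := by
            rw [hmom, ht k hk, nesterov_sq_sub_self]
        _ ≤ _ := ih
  rcases le_or_gt (F (y k) - F xstar) 0 with hneg | hpos
  · exact hneg.trans (by positivity)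
  have hscaled : ((k + 1) / 2) ^ 2 * (F (y k) - F xstar) ≤ ‖z 1 - xstar‖ ^ 2 / (2 * τ) :=
    calc ((k + 1) / 2) ^ 2 * (F (y k) - F xstar) ≤ t k ^ 2 * (F (y k) - F xstar) := by
          gcongr; exact ht_ge k hk
      _ ≤ _ := by linarith [hpotential k hk, (by positivity :
          0 ≤ ‖t k • y k - (t k - 1) • y (k - 1) - xstar‖ ^ 2 / (2 * τ))]
  rw [le_div_iff₀ (by positivity)]
  field_simp at hscaled
  linarith

theorem falm_rate_general {n : ℕ}
    (f g : EuclideanSpace ℝ (Fin n) → ℝ)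
    (f' g' : EuclideanSpace ℝ (Fin n) → EuclideanSpace ℝ (Fin n))
    (hf : ConvexOn ℝ Set.univ f) (hg : ConvexOn ℝ Set.univ g)
    (hf' : ∀ x, HasGradientAt f (f' x) x) (hg' : ∀ x, HasGradientAt g (g' x) x)
    (Lf Lg μ : ℝ)
    (hlipf : ∀ a b, ‖f' a - f' b‖ ≤ Lf * ‖a - b‖)
    (hlipg : ∀ a b, ‖g' a - g' b‖ ≤ Lg * ‖a - b‖)
    (hμ0 : 0 < μ) (hμ : μ ≤ min (1 / Lf) (1 / Lg))
    (Qf Qg : EuclideanSpace ℝ (Fin n) → EuclideanSpace ℝ (Fin n) → ℝ)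
    (hQf : ∀ u v, Qf u v = g u + f v + ⟪f' v, u - v⟫ + ‖u - v‖ ^ 2 / (2 * μ))
    (hQg : ∀ u v, Qg u v = f u + g v + ⟪g' v, u - v⟫ + ‖u - v‖ ^ 2 / (2 * μ))
    -- FALM iterates: z¹ = x⁰ = y⁰, t₁ = 1
    (x y z : ℕ → EuclideanSpace ℝ (Fin n)) (t : ℕ → ℝ)
    (hz1 : z 1 = x 0) (ht1 : t 1 = 1)
    (hx : ∀ k : ℕ, 1 ≤ k → ∀ w, Qg (x k) (z k) ≤ Qg w (z k))
    (hy : ∀ k : ℕ, 1 ≤ k → ∀ w, Qf (y k) (x k) ≤ Qf w (x k))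
    (ht : ∀ k : ℕ, 1 ≤ k → t (k + 1) = (1 + Real.sqrt (1 + 4 * (t k) ^ 2)) / 2)
    (hz : ∀ k : ℕ, 1 ≤ k →
      z (k + 1) = y k + ((t k - 1) / t (k + 1)) • (y k - y (k - 1)))
    (xstar : EuclideanSpace ℝ (Fin n)) :
    ∀ k : ℕ, 1 ≤ k →
      f (y k) + g (y k) - (f xstar + g xstar) ≤
        ‖x 0 - xstar‖ ^ 2 / (μ * ((k : ℝ) + 1) ^ 2) := by
  have lipschitz_le_inv : ∀ {L : ℝ}, μ ≤ 1 / L → L ≤ μ⁻¹ := fun {L} h => by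
    have hL : 0 < L := one_div_pos.mp (hμ0.trans_le h)
    rwa [le_inv_comm₀ hL hμ0, ← one_div]
  have hLfμ := lipschitz_le_inv (hμ.trans (min_le_left _ _))
  have hLgμ := lipschitz_le_inv (hμ.trans (min_le_right _ _))
  obtain rfl : Qf = linearizedModel g f f' μ := funext₂ hQf
  obtain rfl : Qg = linearizedModel f g g' μ := funext₂ hQg
  have hprox : ∀ k, 1 ≤ k → ∀ w, f (y k) + g (y k) + ‖w - y k‖ ^ 2 / (2 * (2 * μ)) ≤
      f w + g w + ‖w - z k‖ ^ 2 / (2 * (2 * μ)) := by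
    intro k hk w
    have hxk := linearizedModel_prox_ineq hf hg hg' hlipg hLgμ (isMinOn_univ_iff.mpr (hx k hk)) w
    have hyk := linearizedModel_prox_ineq hg hf hf' hlipf hLfμ (isMinOn_univ_iff.mpr (hy k hk)) w
    have hdescent : g (y k) + f (y k) ≤ g (x k) + f (x k) :=
      calc _ ≤ linearizedModel g f f' μ (y k) (x k) := le_linearizedModel hf' hlipf hLfμ _ _
        _ ≤ linearizedModel g f f' μ (x k) (x k) := hy k hk (x k)
        _ = _ := by simp [linearizedModel]
    have halve : ∀ r : ℝ, r / (2 * (2 * μ)) = r / (2 * μ) / 2 := fun r => by ring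
    rw [halve, halve]
    linarith
  intro k hk
  calc _ ≤ 2 * ‖z 1 - xstar‖ ^ 2 / (2 * μ * (k + 1) ^ 2) :=
        fista_rate (F := fun u => f u + g u) (by positivity) ht1 ht hz hprox xstar hk
    _ = _ := by rw [hz1, mul_assoc, mul_div_mul_left _ _ two_ne_zero]

/-- Convergence rate of the fast alternating linearization method (FALM) when both `f` and `g`
are smooth with Lipschitz gradients and `μ ≤ min{1/L(f), 1/L(g)}`. -/
theorem falm_rate {n : ℕ}
    (f g : EuclideanSpace ℝ (Fin n) → ℝ)
    (f' g' : EuclideanSpace ℝ (Fin n) → EuclideanSpace ℝ (Fin n))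
    (hf : ConvexOn ℝ Set.univ f) (hg : ConvexOn ℝ Set.univ g)
    (hf' : ∀ x, HasGradientAt f (f' x) x) (hg' : ∀ x, HasGradientAt g (g' x) x)
    (Lf Lg μ : ℝ) (hLf : 0 < Lf) (hLg : 0 < Lg)
    (hlipf : ∀ a b, ‖f' a - f' b‖ ≤ Lf * ‖a - b‖)
    (hlipg : ∀ a b, ‖g' a - g' b‖ ≤ Lg * ‖a - b‖)
    (hμ0 : 0 < μ) (hμ : μ ≤ min (1 / Lf) (1 / Lg))
    (Qf Qg : EuclideanSpace ℝ (Fin n) → EuclideanSpace ℝ (Fin n) → ℝ)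
    (hQf : ∀ u v, Qf u v = g u + f v + ⟪f' v, u - v⟫ + ‖u - v‖ ^ 2 / (2 * μ))
    (hQg : ∀ u v, Qg u v = f u + g v + ⟪g' v, u - v⟫ + ‖u - v‖ ^ 2 / (2 * μ))
    -- FALM iterates: z¹ = x⁰ = y⁰, t₁ = 1
    (x y z : ℕ → EuclideanSpace ℝ (Fin n)) (t : ℕ → ℝ)
    (hx0 : x 0 = y 0) (hz1 : z 1 = x 0) (ht1 : t 1 = 1)
    (hx : ∀ k : ℕ, 1 ≤ k → ∀ w, Qg (x k) (z k) ≤ Qg w (z k))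
    (hy : ∀ k : ℕ, 1 ≤ k → ∀ w, Qf (y k) (x k) ≤ Qf w (x k))
    (ht : ∀ k : ℕ, 1 ≤ k → t (k + 1) = (1 + Real.sqrt (1 + 4 * (t k) ^ 2)) / 2)
    (hz : ∀ k : ℕ, 1 ≤ k →
      z (k + 1) = y k + ((t k - 1) / t (k + 1)) • (y k - y (k - 1)))
    (xstar : EuclideanSpace ℝ (Fin n)) (hstar : ∀ w, f xstar + g xstar ≤ f w + g w) :
    ∀ k : ℕ, 1 ≤ k →
      f (y k) + g (y k) - (f xstar + g xstar) ≤
        ‖x 0 - xstar‖ ^ 2 / (μ * ((k : ℝ) + 1) ^ 2) :=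
  falm_rate_general f g f' g' hf hg hf' hg' Lf Lg μ hlipf hlipg hμ0 hμ Qf Qg hQf hQg x y z t hz1 ht1
    hx hy ht hz xstar
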